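/- arXiv:2512.09631 — 2 statements merged into one kernel-verified Lean document; each statement's English description precedes it below -/
import Mathlib

section
/- Define the map G′ from the set 𝓜′ of monomials in the variables {i_a} (subject to the D_n pattern constraints and not divisible by any frozen monomial F_i) to the root lattice Q of D_n^(1) by the explicit piecewise formula of the paper (sending i^{±1} to ∓α_i for i ≠ n−1, the products (n−1)_2(n−1)_4, (n−1)_0(n−1)_4, (n−1)_0(n−1)_2 to −α_0, α_0 + α_{n−2} + 2α_{n−1} + α_n, α_0, and the single factors (n−1)_0, (n−1)_2, (n−1)_4 to α_0 + α_{n−1}, −α_{n−1}, α_{n−2} + α_{n−1} + α_n, extended by the canonical factorization of each monomial). Then G′ : 𝓜′ → Q is a bijection. -/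
/-!
Setup for the map G′ of the paper (type D_n of quantum affine algebra, cluster algebra
of type D_n^{(1)}).  Monomials in the variables Y_{i,a} are modeled as finitely
supported functions (ℕ × ℕ) →₀ ℕ, a pair (i, a) recording the Dynkin index i and the
spectral parameter exponent a.  The admissible variables are i₁, i₃ for i ∈ I₀;
j₀, j₂ for j ∈ I₁ \ {n−1}; and (n−1)₀, (n−1)₂, (n−1)₄, where I_fin = I₀ ⊔ I₁ is the
prescribed partition of {1,…,n} with n−1 ∈ I₁.
-/

/-- The simple root α_k of D_n^{(1)} as a coordinate vector in the root lattice. -/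
def alphaV (n k : ℕ) : Fin (n + 1) → ℤ := fun j => if (j : ℕ) = k then 1 else 0

/-- The null root δ = α₁ + α₂ + 2(α₃+⋯+α_{n−1}) + α_n + α₀ of D_n^{(1)}. -/
def deltaV (n : ℕ) : Fin (n + 1) → ℤ :=
  fun j => if (j : ℕ) = 0 ∨ (j : ℕ) = 1 ∨ (j : ℕ) = 2 ∨ (j : ℕ) = n then 1 else 2

/-- The contribution to G of the exponents (a, b, c) of the three variables
(n−1)₀, (n−1)₂, (n−1)₄, computed from the canonical factorization: first remove the
frozen part F_{n−1} = (n−1)₀(n−1)₂(n−1)₄ (which contributes 0), then group the residual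
exponents into the pairs (n−1)₂(n−1)₄ ↦ −α₀, (n−1)₀(n−1)₄ ↦ α₀+α_{n−2}+2α_{n−1}+α_n,
(n−1)₀(n−1)₂ ↦ α₀, and single factors (n−1)₀ ↦ α₀+α_{n−1}, (n−1)₂ ↦ −α_{n−1},
(n−1)₄ ↦ α_{n−2}+α_{n−1}+α_n. -/
def GSpecial (n : ℕ) (a b c : ℕ) : Fin (n + 1) → ℤ :=
  let f := min a (min b c)
  let a' := a - f
  let b' := b - f
  let c' := c - f
  if a' = 0 then
    (min b' c' : ℤ) • (-alphaV n 0) +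
      ((b' - min b' c' : ℕ) : ℤ) • (-alphaV n (n - 1)) +
      ((c' - min b' c' : ℕ) : ℤ) • (alphaV n (n - 2) + alphaV n (n - 1) + alphaV n n)
  else if b' = 0 then
    (min a' c' : ℤ) •
        (alphaV n 0 + alphaV n (n - 2) + alphaV n (n - 1) + alphaV n (n - 1) +
          alphaV n n) +
      ((a' - min a' c' : ℕ) : ℤ) • (alphaV n 0 + alphaV n (n - 1)) +
      ((c' - min a' c' : ℕ) : ℤ) • (alphaV n (n - 2) + alphaV n (n - 1) + alphaV n n)
  else
    (min a' b' : ℤ) • alphaV n 0 +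
      ((a' - min a' b' : ℕ) : ℤ) • (alphaV n 0 + alphaV n (n - 1)) +
      ((b' - min a' b' : ℕ) : ℤ) • (-alphaV n (n - 1))

/-- The map G : 𝓜 → Q of the paper: a monomial contributes
(exponent of i₃ − exponent of i₁)·α_i for i ∈ I₀,
(exponent of j₀ − exponent of j₂)·α_j for j ∈ I₁ \ {n−1}, and the piecewise
contribution of the (n−1)-variables given by the canonical factorization. -/
def GMap (n : ℕ) (I₀ I₁ : Finset ℕ) (m : (ℕ × ℕ) →₀ ℕ) : Fin (n + 1) → ℤ :=
  (∑ i ∈ I₀, ((m (i, 3) : ℤ) - (m (i, 1) : ℤ)) • alphaV n i) +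
    (∑ j ∈ I₁.erase (n - 1), ((m (j, 0) : ℤ) - (m (j, 2) : ℤ)) • alphaV n j) +
    GSpecial n (m (n - 1, 0)) (m (n - 1, 2)) (m (n - 1, 4))

/-- 𝓜: monomials supported on the admissible variables. -/
def MonSet (n : ℕ) (I₀ I₁ : Finset ℕ) : Set ((ℕ × ℕ) →₀ ℕ) :=
  {m | ∀ v ∈ m.support,
    (v.1 ∈ I₀ ∧ (v.2 = 1 ∨ v.2 = 3)) ∨
      (v.1 ∈ I₁ ∧ v.1 ≠ n - 1 ∧ (v.2 = 0 ∨ v.2 = 2)) ∨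
      (v.1 = n - 1 ∧ (v.2 = 0 ∨ v.2 = 2 ∨ v.2 = 4))}

/-- 𝓜′: monomials in 𝓜 divisible by no frozen monomial F_i (for each i, some variable
of F_i has exponent 0). -/
def MonPrime (n : ℕ) (I₀ I₁ : Finset ℕ) : Set ((ℕ × ℕ) →₀ ℕ) :=
  {m | m ∈ MonSet n I₀ I₁ ∧
    (∀ i ∈ I₀, m (i, 1) = 0 ∨ m (i, 3) = 0) ∧
    (∀ j ∈ I₁, j ≠ n - 1 → (m (j, 0) = 0 ∨ m (j, 2) = 0)) ∧
    (m (n - 1, 0) = 0 ∨ m (n - 1, 2) = 0 ∨ m (n - 1, 4) = 0)}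

/-!
STATEMENT 10: the map G′ (the restriction of G to 𝓜′) is a bijection from 𝓜′ onto the
root lattice Q = ⊕_{i=0}^n ℤα_i of D_n^{(1)}.
-/

def gxy (a b c : ℕ) : ℤ × ℤ :=
  if a = 0 then (-(min b c : ℤ), (c : ℤ) - b)
  else if b = 0 then ((a : ℤ), (a : ℤ) + c)
  else ((a : ℤ), (a : ℤ) - b)

def emul (x y : ℤ) : ℤ := max (y - max x 0) 0

def trip (x y : ℤ) : ℕ × ℕ × ℕ :=
  if 0 < x then (if x ≤ y then (x.toNat, 0, (y - x).toNat) else (x.toNat, (x - y).toNat, 0))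
  else (0, (-x - min y 0).toNat, (-x + max y 0).toNat)

lemma trip_zero (x y : ℤ) :
    (trip x y).1 = 0 ∨ (trip x y).2.1 = 0 ∨ (trip x y).2.2 = 0 := by
  unfold trip; split_ifs <;> simp

lemma gxy_trip (x y : ℤ) : gxy (trip x y).1 (trip x y).2.1 (trip x y).2.2 = (x, y) := by
  unfold trip gxy
  split_ifs <;> simp_all [Prod.ext_iff] <;> omega

lemma trip_gxy (a b c : ℕ) (h : a = 0 ∨ b = 0 ∨ c = 0) :
    trip (gxy a b c).1 (gxy a b c).2 = (a, b, c) := by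
  unfold trip gxy
  split_ifs <;> simp_all [Prod.ext_iff] <;> omega

lemma GSpecial_eq (n : ℕ) (hn : 4 ≤ n) (a b c : ℕ) (h : a = 0 ∨ b = 0 ∨ c = 0) :
    GSpecial n a b c = fun j =>
      (gxy a b c).1 * (alphaV n 0 j) + (gxy a b c).2 * (alphaV n (n - 1) j) +
        emul (gxy a b c).1 (gxy a b c).2 * (alphaV n (n - 2) j + alphaV n n j) := by
  have hf : min a (min b c) = 0 := by omega
  by_cases ha : a = 0
  · simp only [GSpecial, hf, Nat.sub_zero, gxy, emul, if_pos ha]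
    funext j
    simp only [Pi.add_apply, Pi.neg_apply, Pi.smul_apply, smul_eq_mul, alphaV]
    split_ifs <;> omega
  · by_cases hb : b = 0
    · simp only [GSpecial, hf, Nat.sub_zero, gxy, emul, if_neg ha, if_pos hb]
      funext j
      simp only [Pi.add_apply, Pi.neg_apply, Pi.smul_apply, smul_eq_mul, alphaV]
      split_ifs <;> omega
    · simp only [GSpecial, hf, Nat.sub_zero, gxy, emul, if_neg ha, if_neg hb]
      funext j
      simp only [Pi.add_apply, Pi.neg_apply, Pi.smul_apply, smul_eq_mul, alphaV]
      split_ifs <;> omega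

lemma sum_alphaV_apply (n : ℕ) (s : Finset ℕ) (d : ℕ → ℤ) (j : Fin (n + 1)) :
    (∑ i ∈ s, d i • alphaV n i) j = if (j : ℕ) ∈ s then d j else 0 := by
  rw [Finset.sum_apply]
  simp only [Pi.smul_apply, alphaV, smul_eq_mul, mul_ite, mul_one, mul_zero]
  rw [Finset.sum_ite_eq s (↑j : ℕ) d]

def fm1 (n : ℕ) : Fin (n + 1) := ⟨n - 1, Nat.lt_succ_of_le (Nat.sub_le n 1)⟩

def wv (n : ℕ) (v : Fin (n + 1) → ℤ) (i : ℕ) : ℤ :=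
  (if h : i < n + 1 then v ⟨i, h⟩ else 0) -
    (if i = n - 2 ∨ i = n then emul (v 0) (v (fm1 n)) else 0)

def invf (n : ℕ) (I₀ I₁ : Finset ℕ) (v : Fin (n + 1) → ℤ) (p : ℕ × ℕ) : ℕ :=
  if p.1 = n - 1 then
    (if p.2 = 0 then (trip (v 0) (v (fm1 n))).1
     else if p.2 = 2 then (trip (v 0) (v (fm1 n))).2.1
     else if p.2 = 4 then (trip (v 0) (v (fm1 n))).2.2 else 0)
  else if p.1 ∈ I₀ then
    (if p.2 = 3 then (wv n v p.1).toNat else if p.2 = 1 then (-(wv n v p.1)).toNat else 0)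
  else if p.1 ∈ I₁ then
    (if p.2 = 0 then (wv n v p.1).toNat else if p.2 = 2 then (-(wv n v p.1)).toNat else 0)
  else 0

noncomputable def invm (n : ℕ) (I₀ I₁ : Finset ℕ) (v : Fin (n + 1) → ℤ) : (ℕ × ℕ) →₀ ℕ :=
  Finsupp.onFinset ((insert (n - 1) (I₀ ∪ I₁)) ×ˢ ({0, 1, 2, 3, 4} : Finset ℕ))
    (invf n I₀ I₁ v)
    (by
      intro p hp
      simp only [Finset.mem_product, Finset.mem_insert, Finset.mem_union,
        Finset.mem_singleton]
      unfold invf at hp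
      split_ifs at hp <;> simp_all)

lemma invm_apply (n : ℕ) (I₀ I₁ : Finset ℕ) (v : Fin (n + 1) → ℤ) (p : ℕ × ℕ) :
    invm n I₀ I₁ v p = invf n I₀ I₁ v p := rfl

lemma GMap_apply (n : ℕ) (hn : 4 ≤ n) (I₀ I₁ : Finset ℕ) (m : (ℕ × ℕ) →₀ ℕ)
    (hsp : m (n - 1, 0) = 0 ∨ m (n - 1, 2) = 0 ∨ m (n - 1, 4) = 0) (j : Fin (n + 1)) :
    GMap n I₀ I₁ m j =
      (if (j : ℕ) ∈ I₀ then ((m (↑j, 3) : ℤ) - m (↑j, 1)) else 0) +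
      (if (j : ℕ) ∈ I₁.erase (n - 1) then ((m (↑j, 0) : ℤ) - m (↑j, 2)) else 0) +
      ((gxy (m (n - 1, 0)) (m (n - 1, 2)) (m (n - 1, 4))).1 * alphaV n 0 j +
       (gxy (m (n - 1, 0)) (m (n - 1, 2)) (m (n - 1, 4))).2 * alphaV n (n - 1) j +
       emul (gxy (m (n - 1, 0)) (m (n - 1, 2)) (m (n - 1, 4))).1
         (gxy (m (n - 1, 0)) (m (n - 1, 2)) (m (n - 1, 4))).2 *
           (alphaV n (n - 2) j + alphaV n n j)) := by
  rw [GMap, GSpecial_eq n hn _ _ _ hsp]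
  simp only [Pi.add_apply, sum_alphaV_apply]

theorem Gprime_bijective (n : ℕ) (hn : 4 ≤ n) (I₀ I₁ : Finset ℕ)
    (hdisj : Disjoint I₀ I₁) (hunion : I₀ ∪ I₁ = Finset.Icc 1 n)
    (hnm1 : n - 1 ∈ I₁) :
    Set.BijOn (GMap n I₀ I₁) (MonPrime n I₀ I₁) Set.univ := by
  have hmem : ∀ k : ℕ, k ∈ I₀ ∪ I₁ ↔ 1 ≤ k ∧ k ≤ n := by
    intro k; rw [hunion, Finset.mem_Icc]
  have h0I₀ : (0 : ℕ) ∉ I₀ := fun h => by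
    have := (hmem 0).1 (Finset.mem_union_left _ h); omega
  have h0I₁ : (0 : ℕ) ∉ I₁ := fun h => by
    have := (hmem 0).1 (Finset.mem_union_right _ h); omega
  have hn1I₀ : (n - 1 : ℕ) ∉ I₀ := fun h => (Finset.disjoint_left.mp hdisj h) hnm1
  have hzero : ∀ mm : (ℕ × ℕ) →₀ ℕ, mm ∈ MonSet n I₀ I₁ → ∀ p q : ℕ,
      ¬((p ∈ I₀ ∧ (q = 1 ∨ q = 3)) ∨ (p ∈ I₁ ∧ p ≠ n - 1 ∧ (q = 0 ∨ q = 2)) ∨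
        (p = n - 1 ∧ (q = 0 ∨ q = 2 ∨ q = 4))) → mm (p, q) = 0 := by
    intro mm hmm p q hshape
    by_contra hz
    exact hshape (hmm (p, q) (Finsupp.mem_support_iff.mpr hz))
  refine ⟨fun m _ => Set.mem_univ _, ?_, ?_⟩
  · -- InjOn
    rintro m ⟨hmS, hm0, hm1, hmsp⟩ m' ⟨hm'S, hm'0, hm'1, hm'sp⟩ heq
    have h0 := congrFun heq ⟨0, by omega⟩
    rw [GMap_apply n hn I₀ I₁ m hmsp, GMap_apply n hn I₀ I₁ m' hm'sp] at h0
    simp only [alphaV, Finset.mem_erase, h0I₀, h0I₁, if_false, mul_ite, mul_one, mul_zero,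
      (show ¬((0 : ℕ) = n - 1) by omega), (show ¬((0 : ℕ) = n - 2) by omega),
      (show ¬((0 : ℕ) = n) by omega), if_true, and_false, false_and] at h0
    norm_num at h0
    have hy0 := congrFun heq ⟨n - 1, by omega⟩
    rw [GMap_apply n hn I₀ I₁ m hmsp, GMap_apply n hn I₀ I₁ m' hm'sp] at hy0
    simp only [alphaV, Finset.mem_erase, hn1I₀, if_false, mul_ite, mul_one, mul_zero,
      (show ¬((n - 1 : ℕ) = 0) by omega), (show ¬((n - 1 : ℕ) = n - 2) by omega),
      (show ¬((n - 1 : ℕ) = n) by omega), ne_eq, not_true_eq_false, false_and] at hy0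
    norm_num at hy0
    have htr : (m (n - 1, 0), m (n - 1, 2), m (n - 1, 4)) =
        (m' (n - 1, 0), m' (n - 1, 2), m' (n - 1, 4)) := by
      rw [← trip_gxy _ _ _ hmsp, ← trip_gxy _ _ _ hm'sp, h0, hy0]
    simp only [Prod.mk.injEq] at htr
    obtain ⟨e0, e2, e4⟩ := htr
    have hI0 : ∀ i ∈ I₀, m (i, 1) = m' (i, 1) ∧ m (i, 3) = m' (i, 3) := by
      intro i hi
      have hrange := (hmem i).1 (Finset.mem_union_left _ hi)
      have hiI₁ : i ∉ I₁ := Finset.disjoint_left.mp hdisj hi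
      have hin1 : i ≠ n - 1 := fun h => hn1I₀ (h ▸ hi)
      have hk := congrFun heq ⟨i, by omega⟩
      rw [GMap_apply n hn I₀ I₁ m hmsp, GMap_apply n hn I₀ I₁ m' hm'sp] at hk
      simp only [alphaV, Finset.mem_erase, if_pos hi, mul_ite, mul_one, mul_zero,
        (show ¬((i : ℕ) = 0) by omega), (show ¬((i : ℕ) = n - 1) from hin1), hiI₁,
        and_false, if_false, e0, e2, e4] at hk
      have := hm0 i hi
      have := hm'0 i hi
      constructor <;> omega
    have hI1 : ∀ j ∈ I₁, j ≠ n - 1 → m (j, 0) = m' (j, 0) ∧ m (j, 2) = m' (j, 2) := by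
      intro i hi hin1
      have hrange := (hmem i).1 (Finset.mem_union_right _ hi)
      have hiI₀ : i ∉ I₀ := Finset.disjoint_right.mp hdisj hi
      have hk := congrFun heq ⟨i, by omega⟩
      rw [GMap_apply n hn I₀ I₁ m hmsp, GMap_apply n hn I₀ I₁ m' hm'sp] at hk
      simp only [alphaV, Finset.mem_erase, hiI₀, mul_ite, mul_one, mul_zero,
        (show ¬((i : ℕ) = 0) by omega), (show ¬((i : ℕ) = n - 1) from hin1), hin1,
        ne_eq, not_false_eq_true, true_and, if_pos hi, if_false, e0, e2, e4] at hk
      have := hm1 i hi hin1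
      have := hm'1 i hi hin1
      constructor <;> omega
    ext v
    obtain ⟨p, q⟩ := v
    by_cases hsh1 : p = n - 1 ∧ (q = 0 ∨ q = 2 ∨ q = 4)
    · obtain ⟨rfl, hq⟩ := hsh1
      rcases hq with rfl | rfl | rfl
      · exact e0
      · exact e2
      · exact e4
    · by_cases hsh2 : p ∈ I₀ ∧ (q = 1 ∨ q = 3)
      · obtain ⟨hp, hq⟩ := hsh2
        obtain ⟨ha, hb⟩ := hI0 p hp
        rcases hq with rfl | rfl
        · exact ha
        · exact hb
      · by_cases hsh3 : p ∈ I₁ ∧ p ≠ n - 1 ∧ (q = 0 ∨ q = 2)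
        · obtain ⟨hp, hpn, hq⟩ := hsh3
          obtain ⟨ha, hb⟩ := hI1 p hp hpn
          rcases hq with rfl | rfl
          · exact ha
          · exact hb
        · have hns : ¬((p ∈ I₀ ∧ (q = 1 ∨ q = 3)) ∨ (p ∈ I₁ ∧ p ≠ n - 1 ∧ (q = 0 ∨ q = 2)) ∨
              (p = n - 1 ∧ (q = 0 ∨ q = 2 ∨ q = 4))) := by
            rintro (h | h | h)
            · exact hsh2 h
            · exact hsh3 h
            · exact hsh1 h
          rw [hzero m hmS p q hns, hzero m' hm'S p q hns]
  · -- SurjOn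
    rintro v -
    refine ⟨invm n I₀ I₁ v, ⟨?_, ?_, ?_, ?_⟩, ?_⟩
    · -- MonSet
      intro p hps
      have hne : invm n I₀ I₁ v p ≠ 0 := Finsupp.mem_support_iff.mp hps
      rw [invm_apply] at hne
      unfold invf at hne
      split_ifs at hne <;> tauto
    · -- prime I₀
      intro i hi
      have hin1 : i ≠ n - 1 := fun h => hn1I₀ (h ▸ hi)
      simp only [invm_apply]
      unfold invf
      simp only [if_neg hin1, if_pos hi]
      norm_num
      omega
    · -- prime I₁
      intro j hj hjn1
      have hjI₀ : j ∉ I₀ := Finset.disjoint_right.mp hdisj hj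
      simp only [invm_apply]
      unfold invf
      simp only [if_neg hjn1, if_neg hjI₀, if_pos hj]
      norm_num
      omega
    · -- prime special
      simp only [invm_apply]
      unfold invf
      norm_num
      exact trip_zero _ _
    · -- GMap (invm v) = v
      have hA : invm n I₀ I₁ v (n - 1, 0) = (trip (v 0) (v (fm1 n))).1 := by
        simp [invm_apply, invf]
      have hB : invm n I₀ I₁ v (n - 1, 2) = (trip (v 0) (v (fm1 n))).2.1 := by
        simp [invm_apply, invf]
      have hC : invm n I₀ I₁ v (n - 1, 4) = (trip (v 0) (v (fm1 n))).2.2 := by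
        simp [invm_apply, invf]
      have hsum0 : (∑ i ∈ I₀, ((invm n I₀ I₁ v (i, 3) : ℤ) - invm n I₀ I₁ v (i, 1)) •
          alphaV n i) = ∑ i ∈ I₀, wv n v i • alphaV n i := by
        refine Finset.sum_congr rfl fun i hi => ?_
        have hin1 : i ≠ n - 1 := fun h => hn1I₀ (h ▸ hi)
        have h3 : invm n I₀ I₁ v (i, 3) = (wv n v i).toNat := by
          simp [invm_apply, invf, hi, hin1]
        have h1 : invm n I₀ I₁ v (i, 1) = (-(wv n v i)).toNat := by
          simp [invm_apply, invf, hi, hin1]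
        rw [h3, h1]
        congr 1
        omega
      have hsum1 : (∑ j ∈ I₁.erase (n - 1), ((invm n I₀ I₁ v (j, 0) : ℤ) -
          invm n I₀ I₁ v (j, 2)) • alphaV n j) =
          ∑ j ∈ I₁.erase (n - 1), wv n v j • alphaV n j := by
        refine Finset.sum_congr rfl fun j hj => ?_
        rw [Finset.mem_erase] at hj
        have hjI₀ : j ∉ I₀ := Finset.disjoint_right.mp hdisj hj.2
        have h3 : invm n I₀ I₁ v (j, 0) = (wv n v j).toNat := by
          simp [invm_apply, invf, hj.1, hj.2, hjI₀]
        have h1 : invm n I₀ I₁ v (j, 2) = (-(wv n v j)).toNat := by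
          simp [invm_apply, invf, hj.1, hj.2, hjI₀]
        rw [h3, h1]
        congr 1
        omega
      rw [GMap, hsum0, hsum1, hA, hB, hC, GSpecial_eq n hn _ _ _ (trip_zero _ _)]
      have hg := gxy_trip (v 0) (v (fm1 n))
      rw [hg]
      funext j
      simp only [Pi.add_apply, sum_alphaV_apply]
      have hjn : (j : ℕ) ≤ n := by omega
      by_cases hj0 : (j : ℕ) = 0
      · have hj' : j = 0 := Fin.ext (by simpa using hj0)
        subst hj'
        simp [alphaV, h0I₀, h0I₁, Finset.mem_erase,
          (show ¬((0 : ℕ) = n - 1) by omega), (show ¬((0 : ℕ) = n - 2) by omega),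
          (show ¬((0 : ℕ) = n) by omega)]
      · by_cases hjn1 : (j : ℕ) = n - 1
        · have hj' : j = fm1 n := Fin.ext hjn1
          subst hj'
          simp [alphaV, fm1, hn1I₀, Finset.mem_erase,
            (show ¬((n - 1 : ℕ) = 0) by omega), (show ¬((n - 1 : ℕ) = n - 2) by omega),
            (show ¬((n - 1 : ℕ) = n) by omega)]
        · have hj1 : 1 ≤ (j : ℕ) := by omega
          have hmemj := (hmem (j : ℕ)).2 ⟨hj1, hjn⟩
          rw [Finset.mem_union] at hmemj
          simp only [alphaV, if_neg hj0, if_neg hjn1, mul_zero, add_zero, zero_add]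
          rcases hmemj with hin0 | hin1
          · have hjI₁ : (j : ℕ) ∉ I₁ := Finset.disjoint_left.mp hdisj hin0
            rw [if_pos hin0, if_neg (by simp [Finset.mem_erase, hjI₁])]
            unfold wv
            rw [dif_pos j.isLt]
            simp only [Fin.eta]
            by_cases h2 : (j : ℕ) = n - 2
            · have hN : ¬((j : ℕ) = n) := by omega
              rw [if_pos (Or.inl h2), if_pos h2, if_neg hN]; ring
            · by_cases hN : (j : ℕ) = n
              · rw [if_pos (Or.inr hN), if_neg h2, if_pos hN]; ring
              · rw [if_neg (not_or.mpr ⟨h2, hN⟩), if_neg h2, if_neg hN]; ring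
          · have hjI₀ : (j : ℕ) ∉ I₀ := Finset.disjoint_right.mp hdisj hin1
            rw [if_neg hjI₀, if_pos (Finset.mem_erase.mpr ⟨hjn1, hin1⟩)]
            unfold wv
            rw [dif_pos j.isLt]
            simp only [Fin.eta]
            by_cases h2 : (j : ℕ) = n - 2
            · have hN : ¬((j : ℕ) = n) := by omega
              rw [if_pos (Or.inl h2), if_pos h2, if_neg hN]; ring
            · by_cases hN : (j : ℕ) = n
              · rw [if_pos (Or.inr hN), if_neg h2, if_pos hN]; ring
              · rw [if_neg (not_or.mpr ⟨h2, hN⟩), if_neg h2, if_neg hN]; ring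
end

section
/- With G′ : 𝓜′ → Q the bijection above for type D_n^(1), the preimages of multiples of the null root multiply compatibly with translates: for all p, l ∈ ℤ_{>0}, G′^{−1}(pδ − α_1) · G′^{−1}(lδ) = G′^{−1}((p+l)δ − α_1) as monomials in 𝓜′. -/
/-!
STATEMENT 11: the preimages under G′ of the multiples of the null root multiply
compatibly with translates: for all p, l > 0,
G′⁻¹(pδ − α₁) · G′⁻¹(lδ) = G′⁻¹((p+l)δ − α₁) in 𝓜′.  (Equivalently: if m₁, m₂, m₃ ∈ 𝓜′
have G-images pδ − α₁, lδ, (p+l)δ − α₁ respectively, then m₁·m₂ = m₃; multiplication of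
monomials is addition of exponent functions.)
-/

lemma sum_smul_alpha (n : ℕ) (s : Finset ℕ) (f : ℕ → ℤ) (i : ℕ) (hi : i < n + 1) :
    (∑ j ∈ s, f j • alphaV n j) ⟨i, hi⟩ = if i ∈ s then f i else 0 := by
  rw [Finset.sum_apply]
  simp only [Pi.smul_apply, alphaV, smul_eq_mul, mul_ite, mul_one, mul_zero]
  exact Finset.sum_ite_eq s i f

set_option maxHeartbeats 1000000 in
lemma GSpecial_apply (n : ℕ) (hn : 4 ≤ n) (a b c : ℕ) (h : a = 0 ∨ b = 0 ∨ c = 0)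
    (i : ℕ) (hi : i < n + 1) :
    GSpecial n a b c ⟨i, hi⟩ =
      ((a : ℤ) - min b c) * (if i = 0 then 1 else 0)
        + ((c : ℤ) - min b c) * ((if i = n - 2 then 1 else 0) + (if i = n then 1 else 0))
        + ((a : ℤ) + c - b) * (if i = n - 1 then 1 else 0) := by
  have hf : min a (min b c) = 0 := by omega
  simp only [GSpecial, hf, Nat.sub_zero]
  by_cases ha : a = 0 <;> by_cases hb : b = 0 <;>
    simp only [ha, hb, if_true, ite_true, ite_false, eq_self_iff_true, if_false] <;>
    simp only [alphaV, Pi.add_apply, Pi.smul_apply, Pi.neg_apply, smul_eq_mul] <;>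
    split_ifs <;> first | contradiction | omega

def dltN (n i : ℕ) : ℕ := if i = 0 ∨ i = 1 ∨ i = 2 ∨ i = n then 1 else 2
def sN (n i : ℕ) : ℕ := if i = n - 2 ∨ i = n then 1 else 0
def dN (n q e i : ℕ) : ℕ := q * (dltN n i - sN n i) - e * (if i = 1 then 1 else 0)

def mval (n : ℕ) (I₀ I₁ : Finset ℕ) (q e : ℕ) : ℕ × ℕ → ℕ := fun x =>
  if x.1 = n - 1 then (if x.2 = 0 ∨ x.2 = 4 then q else 0)
  else if x.1 ∈ I₀ ∧ x.2 = 3 then dN n q e x.1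
  else if x.1 ∈ I₁ ∧ x.2 = 0 then dN n q e x.1
  else 0

set_option maxHeartbeats 2000000 in
lemma key (n : ℕ) (hn : 4 ≤ n) (I₀ I₁ : Finset ℕ)
    (hdisj : Disjoint I₀ I₁) (hunion : I₀ ∪ I₁ = Finset.Icc 1 n)
    (hnm1 : n - 1 ∈ I₁) (q e : ℕ) (hq : 1 ≤ q) (he : e ≤ 1)
    (m : (ℕ × ℕ) →₀ ℕ) (hm : m ∈ MonPrime n I₀ I₁)
    (hG : GMap n I₀ I₁ m = (q : ℤ) • deltaV n - (e : ℤ) • alphaV n 1) :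
    ∀ x : ℕ × ℕ, m x = mval n I₀ I₁ q e x := by
  obtain ⟨hsupp, hI0, hI1, hsp⟩ := hm
  have hmemI0 : ∀ i ∈ I₀, 1 ≤ i ∧ i ≤ n := fun i hi => by
    have : i ∈ Finset.Icc 1 n := hunion ▸ Finset.mem_union_left I₁ hi
    exact Finset.mem_Icc.mp this
  have hmemI1 : ∀ i ∈ I₁, 1 ≤ i ∧ i ≤ n := fun i hi => by
    have : i ∈ Finset.Icc 1 n := hunion ▸ Finset.mem_union_right I₀ hi
    exact Finset.mem_Icc.mp this
  have hnI0 : n - 1 ∉ I₀ := fun h => (Finset.disjoint_left.mp hdisj h) hnm1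
  have hco : ∀ (i : ℕ), i < n + 1 →
      (if i ∈ I₀ then (m (i,3) : ℤ) - (m (i,1) : ℤ) else 0)
        + (if i ∈ I₁.erase (n-1) then (m (i,0) : ℤ) - (m (i,2) : ℤ) else 0)
        + (((m (n-1,0) : ℤ) - min (m (n-1,2)) (m (n-1,4))) * (if i = 0 then 1 else 0)
            + ((m (n-1,4) : ℤ) - min (m (n-1,2)) (m (n-1,4))) *
                ((if i = n - 2 then 1 else 0) + (if i = n then 1 else 0))
            + ((m (n-1,0) : ℤ) + (m (n-1,4) : ℤ) - (m (n-1,2) : ℤ)) *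
                (if i = n - 1 then 1 else 0))
      = (q : ℤ) * (if i = 0 ∨ i = 1 ∨ i = 2 ∨ i = n then 1 else 2)
          - (e : ℤ) * (if i = 1 then 1 else 0) := by
    intro i hi
    have h := congrFun hG ⟨i, hi⟩
    simp only [GMap, Pi.add_apply] at h
    rw [sum_smul_alpha, sum_smul_alpha, GSpecial_apply n hn _ _ _ hsp i hi] at h
    simpa [deltaV, alphaV, Pi.sub_apply, Pi.smul_apply, smul_eq_mul] using h
  have h0I0 : (0 : ℕ) ∉ I₀ := fun h => by have := hmemI0 0 h; omega
  have h0I1 : (0 : ℕ) ∉ I₁.erase (n - 1) := fun h => by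
    have := hmemI1 0 (Finset.mem_of_mem_erase h); omega
  have h0 := hco 0 (by omega)
  rw [if_neg h0I0, if_neg h0I1] at h0
  have h1 := hco (n - 1) (by omega)
  rw [if_neg hnI0, if_neg (Finset.notMem_erase _ _)] at h1
  have ha : (m (n-1,0) : ℤ) - min (m (n-1,2)) (m (n-1,4)) = q := by
    split_ifs at h0 <;> first | contradiction | omega
  have hb : (m (n-1,0) : ℤ) + (m (n-1,4) : ℤ) - (m (n-1,2) : ℤ) = 2 * q := by
    split_ifs at h1 <;> first | contradiction | omega
  have hA : m (n-1,0) = q := by omega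
  have hB : m (n-1,2) = 0 := by omega
  have hC : m (n-1,4) = q := by omega
  have hz : ∀ x : ℕ × ℕ, ¬((x.1 ∈ I₀ ∧ (x.2 = 1 ∨ x.2 = 3)) ∨
      (x.1 ∈ I₁ ∧ x.1 ≠ n - 1 ∧ (x.2 = 0 ∨ x.2 = 2)) ∨
      (x.1 = n - 1 ∧ (x.2 = 0 ∨ x.2 = 2 ∨ x.2 = 4))) → m x = 0 := by
    intro x hx
    by_contra hne
    exact hx (hsupp x (Finsupp.mem_support_iff.mpr hne))
  rintro ⟨i, t⟩
  by_cases hin : i = n - 1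
  · subst hin
    simp only [mval, if_pos rfl]
    by_cases ht : t = 0 ∨ t = 4
    · rw [if_pos ht]; rcases ht with h | h <;> subst h <;> assumption
    · rw [if_neg ht]
      by_cases ht2 : t = 2
      · subst ht2; exact hB
      · refine hz _ ?_
        rintro (⟨h, _⟩ | ⟨_, h, _⟩ | ⟨_, h⟩)
        · exact hnI0 h
        · exact h rfl
        · tauto
  · by_cases hi0 : i ∈ I₀
    · have hirange := hmemI0 i hi0
      have hiI1 : i ∉ I₁ := fun h => (Finset.disjoint_left.mp hdisj hi0) h
      have hce := hco i (by omega)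
      rw [if_pos hi0, if_neg (fun h => hiI1 (Finset.mem_of_mem_erase h))] at hce
      have hd13 := hI0 i hi0
      simp only [mval, if_neg hin]
      by_cases ht3 : t = 3
      · subst ht3
        rw [if_pos ⟨hi0, rfl⟩]
        simp only [dN, dltN, sN]
        split_ifs at hce ⊢ <;> first | contradiction | omega
      · rw [if_neg (fun hh => ht3 hh.2), if_neg (fun hh => hiI1 hh.1)]
        by_cases ht1 : t = 1
        · subst ht1
          split_ifs at hce <;> first | contradiction | omega
        · refine hz _ ?_
          rintro (⟨_, h⟩ | ⟨h, _⟩ | ⟨h, _⟩)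
          · tauto
          · exact hiI1 h
          · exact hin h
    · by_cases hi1 : i ∈ I₁
      · have hirange := hmemI1 i hi1
        have hce := hco i (by omega)
        rw [if_neg hi0, if_pos (Finset.mem_erase.mpr ⟨hin, hi1⟩)] at hce
        have hd02 := hI1 i hi1 hin
        simp only [mval, if_neg hin, if_neg (fun hh : i ∈ I₀ ∧ t = 3 => hi0 hh.1)]
        by_cases ht0 : t = 0
        · subst ht0
          rw [if_pos ⟨hi1, rfl⟩]
          simp only [dN, dltN, sN]
          split_ifs at hce ⊢ <;> first | contradiction | omega
        · rw [if_neg (fun hh => ht0 hh.2)]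
          by_cases ht2 : t = 2
          · subst ht2
            split_ifs at hce <;> first | contradiction | omega
          · refine hz _ ?_
            rintro (⟨h, _⟩ | ⟨_, _, h⟩ | ⟨h, _⟩)
            · exact hi0 h
            · tauto
            · exact hin h
      · have hzero : m (i, t) = 0 := by
          refine hz _ ?_
          rintro (⟨h, _⟩ | ⟨h, _⟩ | ⟨h, _⟩)
          · exact hi0 h
          · exact hi1 h
          · exact hin h
        simp [mval, hin, hi0, hi1, hzero]

theorem Gprime_inv_delta_mul (n : ℕ) (hn : 4 ≤ n) (I₀ I₁ : Finset ℕ)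
    (hdisj : Disjoint I₀ I₁) (hunion : I₀ ∪ I₁ = Finset.Icc 1 n)
    (hnm1 : n - 1 ∈ I₁)
    (p l : ℕ) (hp : 0 < p) (hl : 0 < l)
    (m₁ m₂ m₃ : (ℕ × ℕ) →₀ ℕ)
    (h₁ : m₁ ∈ MonPrime n I₀ I₁) (h₂ : m₂ ∈ MonPrime n I₀ I₁)
    (h₃ : m₃ ∈ MonPrime n I₀ I₁)
    (hG₁ : GMap n I₀ I₁ m₁ = (p : ℤ) • deltaV n - alphaV n 1)
    (hG₂ : GMap n I₀ I₁ m₂ = (l : ℤ) • deltaV n)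
    (hG₃ : GMap n I₀ I₁ m₃ = ((p + l : ℕ) : ℤ) • deltaV n - alphaV n 1) :
    m₁ + m₂ = m₃ := by
  have k₁ := key n hn I₀ I₁ hdisj hunion hnm1 p 1 hp le_rfl m₁ h₁
    (by rw [hG₁]; norm_num)
  have k₂ := key n hn I₀ I₁ hdisj hunion hnm1 l 0 hl (by norm_num) m₂ h₂
    (by rw [hG₂]; norm_num)
  have k₃ := key n hn I₀ I₁ hdisj hunion hnm1 (p + l) 1 (by omega) le_rfl m₃ h₃
    (by rw [hG₃]; norm_num)
  ext x
  rw [Finsupp.add_apply, k₁ x, k₂ x, k₃ x]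
  simp only [mval, dN, dltN, sN]
  split_ifs <;> first | contradiction | omega
end
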